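/- Let Ω = {1, 2}, identify each probability function p with the vector (p({1}), p({2})) ∈ ℝ², and let θ(p) ∈ [0, π/2] be the angle this nonzero vector makes with the x-axis. Define s(p) = (1 + cos θ(p), sin θ(p)) if θ(p) ≤ π/4, and s(p) = (cos θ(p), 1 + sin θ(p)) if θ(p) > π/4. Then s is strictly proper on the probability functions: for all probability functions p ≠ q, p({1}) s(q)₁ + p({2}) s(q)₂ < p({1}) s(p)₁ + p({2}) s(p)₂. -/

import Mathlib

/-- The two-circle scoring rule on `Ω = {1,2}`, applied to the probability
`(a, b)`.  With `r = √(a² + b²)` we have `cos θ(p) = a/r` and `sin θ(p) = b/r`,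
and `θ(p) ≤ π/4 ↔ b ≤ a`; so the score is `(1 + cos θ, sin θ)` when `θ ≤ π/4`
and `(cos θ, 1 + sin θ)` when `θ > π/4`. -/
noncomputable def twoCircleScore (a b : ℝ) : ℝ × ℝ :=
  if b ≤ a then
    (1 + a / Real.sqrt (a ^ 2 + b ^ 2), b / Real.sqrt (a ^ 2 + b ^ 2))
  else
    (a / Real.sqrt (a ^ 2 + b ^ 2), 1 + b / Real.sqrt (a ^ 2 + b ^ 2))

theorem stmt11 (a b a' b' : ℝ)
    (ha : 0 ≤ a) (hb : 0 ≤ b) (hab : a + b = 1)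
    (ha' : 0 ≤ a') (hb' : 0 ≤ b') (hab' : a' + b' = 1)
    (hne : (a, b) ≠ (a', b')) :
    a * (twoCircleScore a' b').1 + b * (twoCircleScore a' b').2 <
      a * (twoCircleScore a b).1 + b * (twoCircleScore a b).2 := by
  have hd : a * b' ≠ b * a' := by
    intro h
    apply hne
    have haa : a = a' := by nlinarith
    have hbb : b = b' := by linarith
    simp [haa, hbb]
  set r := Real.sqrt (a ^ 2 + b ^ 2) with hr_def
  set r' := Real.sqrt (a' ^ 2 + b' ^ 2) with hr'_def
  have hr : 0 < r := Real.sqrt_pos.2 (by nlinarith [sq_nonneg (a-b)])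
  have hr' : 0 < r' := Real.sqrt_pos.2 (by nlinarith [sq_nonneg (a'-b')])
  have hr2 : r ^ 2 = a ^ 2 + b ^ 2 := Real.sq_sqrt (by positivity)
  have hr'2 : r' ^ 2 = a' ^ 2 + b' ^ 2 := Real.sq_sqrt (by positivity)
  have key : a * a' + b * b' < r * r' := by
    have h1 : (a * a' + b * b') ^ 2 < (r * r') ^ 2 := by
      have hd' : a * b' - b * a' ≠ 0 := sub_ne_zero.mpr hd
      have hc : 0 < (a * b' - b * a') ^ 2 := by positivity
      nlinarith
    nlinarith [mul_pos hr hr', mul_nonneg (mul_nonneg ha ha') (mul_nonneg hb hb')]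
  have hself : a * (a / r) + b * (b / r) = r := by
    rw [← mul_div_assoc, ← mul_div_assoc, ← add_div, div_eq_iff hr.ne']
    nlinarith
  have hcross : a * (a' / r') + b * (b' / r') < r := by
    rw [← mul_div_assoc, ← mul_div_assoc, ← add_div, div_lt_iff₀ hr']
    exact key
  unfold twoCircleScore
  split_ifs with h1 h2 h2 <;> simp only <;> nlinarith [hcross, hself]
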